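/- (Lemma 1, Hoeffding's inequality.) Let (Ω, ℙ) be a probability space, n ≥ 1, and let X₁,…,Xₙ : Ω → ℝ be independent random variables, each with the same expected value μ and almost surely bounded in a fixed interval [a, b] with a < b. Let X̄ₙ = (1/n) ∑_{i=1}^{n} Xᵢ be their empirical average. Then for any ε > 0: ℙ[|X̄ₙ − μ| ≥ ε] ≤ 2 · exp(−2 n ε² / (b − a)²). -/

import Mathlib

/-!
Hoeffding's lemma makes each centred variable `Xᵢ - μ` sub-Gaussian with parameter
`((b - a) / 2)²`; by independence the centred sum is sub-Gaussian with parameter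
`n (b - a)² / 4`, and the Chernoff bound applied to the sum and to its negation bounds the two
tails of `n (X̄ₙ - μ)` beyond `n ε`.
-/

open MeasureTheory ProbabilityTheory Real
open scoped NNReal

namespace ProbabilityTheory.HasSubgaussianMGF

variable {Ω : Type*} [MeasurableSpace Ω] {μ : Measure Ω} {X : Ω → ℝ} {c : ℝ≥0}

lemma measure_abs_ge_le (h : HasSubgaussianMGF X c μ) {ε : ℝ} (hε : 0 ≤ ε) :
    μ.real {ω | ε ≤ |X ω|} ≤ 2 * exp (-ε ^ 2 / (2 * c)) := by
  have h_split : {ω | ε ≤ |X ω|} = {ω | ε ≤ X ω} ∪ {ω | ε ≤ (-X) ω} := by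
    ext ω
    simp [le_abs]
  calc μ.real {ω | ε ≤ |X ω|}
      ≤ μ.real {ω | ε ≤ X ω} + μ.real {ω | ε ≤ (-X) ω} :=
        h_split ▸ measureReal_union_le _ _
    _ ≤ exp (-ε ^ 2 / (2 * c)) + exp (-ε ^ 2 / (2 * c)) :=
        add_le_add (h.measure_ge_le hε) (h.neg.measure_ge_le hε)
    _ = 2 * exp (-ε ^ 2 / (2 * c)) := by ring

end ProbabilityTheory.HasSubgaussianMGF

namespace ProbabilityTheory

variable {Ω ι : Type*} [MeasurableSpace Ω] {P : Measure Ω} [IsProbabilityMeasure P]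
  {X : ι → Ω → ℝ} {a b : ℝ}

lemma measure_abs_sum_sub_integral_ge_le (hmeas : ∀ i, AEMeasurable (X i) P)
    (hindep : iIndepFun X P) (hbound : ∀ i, ∀ᵐ ω ∂P, X i ω ∈ Set.Icc a b) (s : Finset ι)
    {ε : ℝ} (hε : 0 ≤ ε) :
    P.real {ω | ε ≤ |∑ i ∈ s, (X i ω - P[X i])|} ≤
      2 * exp (-2 * ε ^ 2 / (s.card * (b - a) ^ 2)) := by
  have hindep_centered : iIndepFun (fun i ω ↦ X i ω - P[X i]) P :=
    hindep.comp (fun i (x : ℝ) ↦ x - ∫ ω, X i ω ∂P) (fun i ↦ measurable_id.sub_const _)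
  have h_sum := HasSubgaussianMGF.sum_of_iIndepFun hindep_centered
    (s := s) (fun i _ ↦ hasSubgaussianMGF_of_mem_Icc (hmeas i) (hbound i))
  refine (h_sum.measure_abs_ge_le hε).trans_eq ?_
  congr 2
  simp only [Finset.sum_const, nsmul_eq_mul, NNReal.coe_mul, NNReal.coe_natCast, NNReal.coe_pow,
    NNReal.coe_div, coe_nnnorm, norm_eq_abs, NNReal.coe_ofNat, div_pow, sq_abs]
  rw [show (2 : ℝ) * (s.card * ((b - a) ^ 2 / 2 ^ 2)) = s.card * (b - a) ^ 2 / 2 by ring,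
    div_div_eq_mul_div]
  ring

end ProbabilityTheory

open MeasureTheory ProbabilityTheory Real in
theorem hoeffding_inequality_general {Ω : Type*} [MeasurableSpace Ω] (P : Measure Ω)
    [IsProbabilityMeasure P] (n : ℕ) (hn : 1 ≤ n) (X : Fin n → Ω → ℝ)
    (hmeas : ∀ i, Measurable (X i))
    (hindep : iIndepFun X P)
    (μ : ℝ) (hmean : ∀ i, ∫ ω, X i ω ∂P = μ)
    (a b : ℝ)
    (hbound : ∀ i, ∀ᵐ ω ∂P, X i ω ∈ Set.Icc a b)
    (ε : ℝ) (hε : 0 < ε) :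
    (P {ω | ε ≤ |(1 / n : ℝ) * ∑ i : Fin n, X i ω - μ|}).toReal ≤
      2 * Real.exp (-2 * n * ε ^ 2 / (b - a) ^ 2) := by
  have hn_pos : (0 : ℝ) < n := by exact_mod_cast hn
  have h_event : {ω | ε ≤ |(1 / n : ℝ) * ∑ i : Fin n, X i ω - μ|} =
      {ω | n * ε ≤ |∑ i : Fin n, (X i ω - P[X i])|} := by
    ext ω
    have h_scaled : ∑ i : Fin n, (X i ω - P[X i]) = n * ((1 / n : ℝ) * ∑ i : Fin n, X i ω - μ) := by
      simp only [hmean, Finset.sum_sub_distrib, Finset.sum_const, Finset.card_univ,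
        Fintype.card_fin, nsmul_eq_mul, one_div]
      field_simp
    simp only [Set.mem_ofPred_eq, h_scaled, abs_mul, Nat.abs_cast, mul_le_mul_iff_right₀ hn_pos]
  have h_exponent : -2 * (n * ε) ^ 2 / ((Finset.univ : Finset (Fin n)).card * (b - a) ^ 2) =
      -2 * n * ε ^ 2 / (b - a) ^ 2 := by
    rw [Finset.card_univ, Fintype.card_fin]
    field_simp
  rw [← measureReal_def, h_event, ← h_exponent]
  exact measure_abs_sum_sub_integral_ge_le (fun i ↦ (hmeas i).aemeasurable) hindep hbound _
    (by positivity)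

open MeasureTheory ProbabilityTheory Real in
/-- Lemma 1 (Hoeffding's inequality): for independent random variables `X₁, …, Xₙ`
with common mean `μ`, each almost surely bounded in `[a, b]`, the probability that
the empirical average deviates from `μ` by at least `ε > 0` is at most
`2 · exp (−2 n ε² / (b − a)²)`. -/
theorem hoeffding_inequality {Ω : Type*} [MeasurableSpace Ω] (P : Measure Ω)
    [IsProbabilityMeasure P] (n : ℕ) (hn : 1 ≤ n) (X : Fin n → Ω → ℝ)
    (hmeas : ∀ i, Measurable (X i))
    (hindep : iIndepFun X P)
    (μ : ℝ) (hmean : ∀ i, ∫ ω, X i ω ∂P = μ)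
    (a b : ℝ) (hab : a < b)
    (hbound : ∀ i, ∀ᵐ ω ∂P, X i ω ∈ Set.Icc a b)
    (ε : ℝ) (hε : 0 < ε) :
    (P {ω | ε ≤ |(1 / n : ℝ) * ∑ i : Fin n, X i ω - μ|}).toReal ≤
      2 * Real.exp (-2 * n * ε ^ 2 / (b - a) ^ 2) :=
  hoeffding_inequality_general P n hn X hmeas hindep μ hmean a b hbound ε hε
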